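/- arXiv:math/0506266 — 3 statements merged into one kernel-verified Lean document; each statement's English description precedes it below -/
import Mathlib

section
/- If M is a γ-block matrix with (γ,u,Ω)-Toeplitz character (i.e. its entries depend on the u-th block indices only through their difference i_u − j_u, in the Ω-nesting), then for any other nesting Ω', the walked matrix W_{Ω→Ω'}(M) has (γ, u', Ω')-Toeplitz character, where u' = Ω'^{-1}(Ω(u)). -/
open Finset

/-- Mixed-radix encoding of the digit tuple `D` in the nesting `Ω`. -/
def enc (d : ℕ) (γ : Fin d → ℕ) (Ω : Equiv.Perm (Fin d)) (D : ∀ l, Fin (γ l)) : ℕ :=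
  ∑ k : Fin d, (D (Ω k) : ℕ) * ∏ l ∈ Finset.univ.filter (fun l => l < k), γ (Ω l)

/-- `X` is the walking index bijection `X^{Ω→Ω'}`. -/
def IsWalking (d : ℕ) (γ : Fin d → ℕ) (Ω Ω' : Equiv.Perm (Fin d))
    (X : Fin (∏ l, γ l) ≃ Fin (∏ l, γ l)) : Prop :=
  ∀ (D : ∀ l, Fin (γ l))
    (h₁ : enc d γ Ω D < ∏ l, γ l) (h₂ : enc d γ Ω' D < ∏ l, γ l),
    X ⟨enc d γ Ω D, h₁⟩ = ⟨enc d γ Ω' D, h₂⟩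

/-- `(γ,u,Ω)`-Toeplitz character: in the `Ω`-nesting the entries of `M` depend on the
`u`-th block digits `i_u, j_u` only through the difference `i_u - j_u`. -/
def TChar (d : ℕ) (γ : Fin d → ℕ) (Ω : Equiv.Perm (Fin d)) (u : Fin d)
    (M : Matrix (Fin (∏ l, γ l)) (Fin (∏ l, γ l)) ℂ) : Prop :=
  ∀ (i j i' j' : ∀ l, Fin (γ l))
    (hi : enc d γ Ω i < ∏ l, γ l) (hj : enc d γ Ω j < ∏ l, γ l)
    (hi' : enc d γ Ω i' < ∏ l, γ l) (hj' : enc d γ Ω j' < ∏ l, γ l),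
    (∀ l, l ≠ Ω u → i l = i' l ∧ j l = j' l) →
    ((i (Ω u) : ℤ) - (j (Ω u) : ℤ) = (i' (Ω u) : ℤ) - (j' (Ω u) : ℤ)) →
    M ⟨enc d γ Ω i, hi⟩ ⟨enc d γ Ω j, hj⟩ = M ⟨enc d γ Ω i', hi'⟩ ⟨enc d γ Ω j', hj'⟩


lemma aux_range (n : ℕ) (f g : ℕ → ℕ) (h : ∀ k < n, f k < g k) :
    ∑ k ∈ Finset.range n, f k * ∏ l ∈ Finset.range k, g l < ∏ l ∈ Finset.range n, g l := by
  induction n with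
  | zero => simp
  | succ n ih =>
    rw [Finset.sum_range_succ, Finset.prod_range_succ]
    have h1 := ih (fun k hk => h k (Nat.lt_succ_of_lt hk))
    have h2 := h n (Nat.lt_succ_self n)
    calc ∑ k ∈ Finset.range n, f k * ∏ l ∈ Finset.range k, g l + f n * ∏ l ∈ Finset.range n, g l
        < ∏ l ∈ Finset.range n, g l + f n * ∏ l ∈ Finset.range n, g l := by omega
      _ = (f n + 1) * ∏ l ∈ Finset.range n, g l := by ring
      _ ≤ (∏ l ∈ Finset.range n, g l) * g n := by
          rw [mul_comm]; exact Nat.mul_le_mul_left _ h2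

lemma encLt (d : ℕ) (γ : Fin d → ℕ) (Ω : Equiv.Perm (Fin d)) (D : ∀ l, Fin (γ l)) :
    enc d γ Ω D < ∏ l, γ l := by
  classical
  set F : ℕ → ℕ := fun k => if h : k < d then (D (Ω ⟨k, h⟩) : ℕ) else 0 with hF
  set G : ℕ → ℕ := fun k => if h : k < d then γ (Ω ⟨k, h⟩) else 1 with hG
  have key : ∑ k ∈ Finset.range d, F k * ∏ l ∈ Finset.range k, G l < ∏ l ∈ Finset.range d, G l := by
    apply aux_range
    intro k hk
    simp only [hF, hG, dif_pos hk]
    exact (D (Ω ⟨k, hk⟩)).isLt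
  have inner : ∀ k : Fin d,
      ∏ l ∈ Finset.univ.filter (fun l => l < k), γ (Ω l) = ∏ l ∈ Finset.range k.val, G l := by
    intro k
    refine Finset.prod_bij' (fun (l : Fin d) _ => l.val)
      (fun (l : ℕ) (hl : l ∈ Finset.range k.val) =>
        (⟨l, lt_trans (Finset.mem_range.mp hl) k.isLt⟩ : Fin d)) ?_ ?_ ?_ ?_ ?_
    · intro l hl
      simp only [Finset.mem_filter, Finset.mem_univ, true_and, Fin.lt_def] at hl
      exact Finset.mem_range.mpr hl
    · intro l hl
      simp only [Finset.mem_filter, Finset.mem_univ, true_and, Fin.lt_def]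
      exact Finset.mem_range.mp hl
    · intro l hl; rfl
    · intro l hl; rfl
    · intro l hl
      simp only [Finset.mem_filter, Finset.mem_univ, true_and, Fin.lt_def] at hl
      simp only [hG]
      rw [dif_pos (lt_trans hl k.isLt)]
  have e1 : enc d γ Ω D = ∑ k ∈ Finset.range d, F k * ∏ l ∈ Finset.range k, G l := by
    rw [enc]
    refine Finset.sum_bij' (fun (k : Fin d) _ => k.val)
      (fun (k : ℕ) (hk : k ∈ Finset.range d) => (⟨k, Finset.mem_range.mp hk⟩ : Fin d)) ?_ ?_ ?_ ?_ ?_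
    · intro k _; exact Finset.mem_range.mpr k.isLt
    · intro k _; exact Finset.mem_univ _
    · intro k _; rfl
    · intro k _; rfl
    · intro k _
      rw [inner k]
      congr 1
      simp only [hF]
      rw [dif_pos k.isLt]
  have e2 : ∏ l, γ l = ∏ l ∈ Finset.range d, G l := by
    rw [← Equiv.prod_comp Ω γ]
    refine Finset.prod_bij' (fun (k : Fin d) _ => k.val)
      (fun (k : ℕ) (hk : k ∈ Finset.range d) => (⟨k, Finset.mem_range.mp hk⟩ : Fin d)) ?_ ?_ ?_ ?_ ?_
    · intro k _; exact Finset.mem_range.mpr k.isLt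
    · intro k _; exact Finset.mem_univ _
    · intro k _; rfl
    · intro k _; rfl
    · intro k _
      simp only [hG]
      rw [dif_pos k.isLt]
  rw [e1, e2]; exact key

theorem stmt3 (d : ℕ) (γ : Fin d → ℕ) (hγ : ∀ k, 0 < γ k)
    (Ω Ω' : Equiv.Perm (Fin d)) (u : Fin d)
    (X : Fin (∏ l, γ l) ≃ Fin (∏ l, γ l)) (hX : IsWalking d γ Ω Ω' X)
    (M : Matrix (Fin (∏ l, γ l)) (Fin (∏ l, γ l)) ℂ)
    (hM : TChar d γ Ω u M) :
    TChar d γ Ω' (Ω'.symm (Ω u)) (M.submatrix ⇑X.symm ⇑X.symm) := by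
  intro i j i' j' hi hj hi' hj' hne hdiff
  have hsymm : ∀ (D : ∀ l, Fin (γ l)) (h₂ : enc d γ Ω' D < ∏ l, γ l),
      X.symm ⟨enc d γ Ω' D, h₂⟩ = ⟨enc d γ Ω D, encLt d γ Ω D⟩ := by
    intro D h₂
    rw [← hX D (encLt d γ Ω D) h₂, Equiv.symm_apply_apply]
  simp only [Matrix.submatrix_apply, hsymm]
  rw [Equiv.apply_symm_apply] at hne hdiff
  exact hM i j i' j' _ _ _ _ hne hdiff
end

section
/- Levinson recursion step: let M^{N+1} be an (N+1)×(N+1) Hermitian positive definite Toeplitz matrix with entries M(k−l), and let p^N, q^N ∈ ℂ^N solve M^N p^N = e_0 and M^N q^N = e_{N−1} for the N×N leading principal submatrix M^N. Then there exists a scalar σ ∈ ℂ such that the vector p' := (p^N/p^N_0, 0)ᵀ + σ (0, q^N/q^N_{N−1})ᵀ satisfies M^{N+1} p' = c e_0 for some c ∈ ℂ, c ≠ 0. -/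
/-! Padding `p/p₀` with a trailing zero and `q/q_{N-1}` with a leading zero, the Toeplitz
structure makes `M^{N+1}` act on each padded vector as `M^N` on the original one, except for a
single overflow entry (in the last, resp. first, row). So the image of
`(p/p₀, 0) + σ (0, q/q_{N-1})` vanishes outside the first and last rows, and a suitable `σ`
kills the last one. The remaining first entry `c` is nonzero because it equals `v* M^{N+1} v > 0`
for this vector `v`, whose first entry is `1`. -/

open scoped ComplexOrder

theorem Fin.snoc_single_add_smul_cons_single {R : Type*} [Semiring R] (n : ℕ) {a b α β σ : R}
    (h : α + σ * b = 0) :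
    (Fin.snoc (Pi.single (0 : Fin (n + 1)) a) α : Fin (n + 2) → R) +
        σ • Fin.cons β (Pi.single (Fin.last n) b) = Pi.single 0 (a + σ * β) := by
  ext k
  induction k using Fin.lastCases with
  | last => simpa [Fin.cons_last] using h
  | cast k =>
    induction k using Fin.cases with
    | zero => simp
    | succ k =>
      rw [Pi.add_apply, Pi.smul_apply, Fin.snoc_castSucc, ← Fin.succ_castSucc, Fin.cons_succ]
      simp [Fin.castSucc_ne_last]

namespace Matrix

section PosDef

variable {n R : Type*} [Fintype n] [DecidableEq n] [Ring R] [PartialOrder R] [StarRing R]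
  {A : Matrix n n R}

theorem PosDef.apply_ne_zero_of_mulVec_eq_single [Nontrivial R] (hA : A.PosDef) {x : n → R}
    {i : n} (hx : A *ᵥ x = Pi.single i 1) : x i ≠ 0 := by
  intro hxi
  have hx0 : x ≠ 0 := by
    rintro rfl
    simpa using congrFun hx i
  simpa [hx, hxi] using hA.dotProduct_mulVec_pos hx0

theorem PosDef.ne_zero_of_mulVec_eq_smul_single (hA : A.PosDef) {v : n → R} {i : n} {c : R}
    (hv : v i ≠ 0) (hAv : A *ᵥ v = c • Pi.single i 1) : c ≠ 0 := by
  rintro rfl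
  have hv0 : v ≠ 0 := fun h => hv (by simp [h])
  simpa [hAv] using hA.dotProduct_mulVec_pos hv0

end PosDef

theorem mulVec_div_of_mulVec_eq_single {m K : Type*} [Fintype m] [DecidableEq m] [Field K]
    {A : Matrix m m K} {x : m → K} {i : m} (hx : A *ᵥ x = Pi.single i 1) (c : K) :
    A *ᵥ (fun j => x j / c) = Pi.single i c⁻¹ := by
  have : (fun j => x j / c) = c⁻¹ • x := by ext; simp [div_eq_inv_mul]
  rw [this, mulVec_smul, hx, ← Pi.single_smul', smul_eq_mul, mul_one]

def toeplitz {R : Type*} (M : ℤ → R) (n : ℕ) : Matrix (Fin n) (Fin n) R :=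
  of fun k l => M (k - l)

section Toeplitz

variable {R : Type*} (M : ℤ → R) (n : ℕ)

theorem toeplitz_submatrix_castSucc :
    (toeplitz M (n + 1)).submatrix Fin.castSucc Fin.castSucc = toeplitz M n :=
  rfl

theorem PosDef.toeplitz_of_succ [Ring R] [PartialOrder R] [StarRing R]
    (h : (toeplitz M (n + 1)).PosDef) : (toeplitz M n).PosDef :=
  toeplitz_submatrix_castSucc M n ▸ h.submatrix (Fin.castSucc_injective n)

variable [Semiring R]

theorem toeplitz_mulVec_snoc_zero (x : Fin n → R) :
    toeplitz M (n + 1) *ᵥ Fin.snoc x 0 =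
      Fin.snoc (toeplitz M n *ᵥ x) (∑ l : Fin n, M (n - l) * x l) := by
  ext k
  induction k using Fin.lastCases <;>
    simp [toeplitz, mulVec, dotProduct, Fin.sum_univ_castSucc]

theorem toeplitz_mulVec_cons_zero (x : Fin n → R) :
    toeplitz M (n + 1) *ᵥ Fin.cons 0 x =
      Fin.cons (∑ l : Fin n, M (-(l + 1)) * x l) (toeplitz M n *ᵥ x) := by
  ext k
  induction k using Fin.cases <;>
    simp [toeplitz, mulVec, dotProduct, Fin.sum_univ_succ]

end Toeplitz

theorem exists_toeplitz_mulVec_levinson {K : Type*} [Field K] (M : ℤ → K) (n : ℕ)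
    (p q : Fin (n + 1) → K)
    (hp : toeplitz M (n + 1) *ᵥ p = Pi.single 0 1)
    (hq : toeplitz M (n + 1) *ᵥ q = Pi.single (Fin.last n) 1) (hqn : q (Fin.last n) ≠ 0) :
    ∃ σ c : K, toeplitz M (n + 2) *ᵥ
        (Fin.snoc (fun i => p i / p 0) 0 + σ • Fin.cons 0 (fun i => q i / q (Fin.last n))) =
      c • Pi.single 0 1 := by
  set α := ∑ l : Fin (n + 1), M ((n + 1 : ℕ) - l) * (p l / p 0)
  set β := ∑ l : Fin (n + 1), M (-(l + 1)) * (q l / q (Fin.last n))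
  have hσ : α + -(α * q (Fin.last n)) * (q (Fin.last n))⁻¹ = 0 := by
    rw [neg_mul, mul_assoc, mul_inv_cancel₀ hqn, mul_one, add_neg_cancel]
  refine ⟨-(α * q (Fin.last n)), (p 0)⁻¹ + -(α * q (Fin.last n)) * β, ?_⟩
  rw [mulVec_add, mulVec_smul, toeplitz_mulVec_snoc_zero, toeplitz_mulVec_cons_zero,
    mulVec_div_of_mulVec_eq_single hp, mulVec_div_of_mulVec_eq_single hq,
    Fin.snoc_single_add_smul_cons_single n hσ, ← Pi.single_smul', smul_eq_mul, mul_one]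

end Matrix

theorem stmt9 (N : ℕ) (hN : 0 < N) (M : ℤ → ℂ)
    (hpos : (Matrix.of fun k l : Fin (N + 1) => M ((k : ℤ) - (l : ℤ))).PosDef)
    (p q : Fin N → ℂ)
    (hp : (Matrix.of fun k l : Fin N => M ((k : ℤ) - (l : ℤ))).mulVec p =
      Pi.single ⟨0, hN⟩ 1)
    (hq : (Matrix.of fun k l : Fin N => M ((k : ℤ) - (l : ℤ))).mulVec q =
      Pi.single ⟨N - 1, by omega⟩ 1) :
    ∃ σ c : ℂ, c ≠ 0 ∧
      (Matrix.of fun k l : Fin (N + 1) => M ((k : ℤ) - (l : ℤ))).mulVec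
        ((Fin.snoc (fun i => p i / p ⟨0, hN⟩) 0 : Fin (N + 1) → ℂ) +
          σ • (Fin.cons 0 (fun i => q i / q ⟨N - 1, by omega⟩) : Fin (N + 1) → ℂ)) =
      c • (Pi.single (0 : Fin (N + 1)) 1 : Fin (N + 1) → ℂ) := by
  obtain ⟨n, rfl⟩ := Nat.exists_eq_succ_of_ne_zero hN.ne'
  have hT : (Matrix.toeplitz M (n + 2)).PosDef := hpos
  have hp0 : p 0 ≠ 0 := hT.toeplitz_of_succ.apply_ne_zero_of_mulVec_eq_single hp
  have hqn : q (Fin.last n) ≠ 0 := hT.toeplitz_of_succ.apply_ne_zero_of_mulVec_eq_single hq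
  obtain ⟨σ, c, hc⟩ := Matrix.exists_toeplitz_mulVec_levinson M n p q hp hq hqn
  have hv0 : (Fin.snoc (fun i => p i / p 0) 0 + σ • Fin.cons 0 (fun i => q i / q (Fin.last n)) :
      Fin (n + 2) → ℂ) 0 ≠ 0 := by
    simp [Fin.snoc, hp0]
  exact ⟨σ, c, hT.ne_zero_of_mulVec_eq_smul_single hv0 hc, hc⟩
end

section
/- Operation-count comparison: with equal orders γ_0 = … = γ_{d−1} = γ and equal grid sizes C_{w_0} = … = C_{w_{d−1}} = C, the cost of the sequential algorithm, Σ_{t=1}^{d} ( (3/2) γ^{3(t−1)} + γ^{2t−1} ) C^{d−t+1}, is strictly less than the Capon cost γ^{2d} C^d, for all sufficiently large C when γ ≥ 2 and d ≥ 2. -/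
theorem stmt16 (d γ : ℕ) (hγ : 2 ≤ γ) (hd : 2 ≤ d) :
    ∃ C₀ : ℝ, ∀ C : ℝ, C₀ ≤ C →
      (∑ t ∈ Finset.Icc 1 d,
          ((3 / 2 : ℝ) * (γ : ℝ) ^ (3 * (t - 1)) + (γ : ℝ) ^ (2 * t - 1)) * C ^ (d - t + 1))
        < (γ : ℝ) ^ (2 * d) * C ^ d := by
  have hγ1 : (1 : ℝ) ≤ (γ : ℝ) := by exact_mod_cast Nat.one_le_of_lt hγ
  have hγ2 : (2 : ℝ) ≤ (γ : ℝ) := by exact_mod_cast hγ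
  set K : ℝ := (3 / 2 : ℝ) * (γ : ℝ) ^ (3 * d) + (γ : ℝ) ^ (2 * d) with hK
  have hKpos : 0 < K := by positivity
  refine ⟨(d : ℝ) * K + 1, fun C hC => ?_⟩
  have hC1 : (1 : ℝ) ≤ C := by
    have : (0 : ℝ) ≤ (d : ℝ) * K := by positivity
    linarith
  have hC0 : (0 : ℝ) < C := by linarith
  have hset : Finset.Icc 1 d = insert 1 (Finset.Icc 2 d) := by
    ext x; simp only [Finset.mem_Icc, Finset.mem_insert]; omega
  rw [hset, Finset.sum_insert (by simp)]
  have hd1 : d - 1 + 1 = d := by omega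
  have hterm1 : ((3 / 2 : ℝ) * (γ : ℝ) ^ (3 * (1 - 1)) + (γ : ℝ) ^ (2 * 1 - 1)) * C ^ (d - 1 + 1)
      = ((3 / 2 : ℝ) + (γ : ℝ)) * C ^ d := by
    rw [hd1]; norm_num
  rw [hterm1]
  -- bound the rest of the sum
  have hrest : (∑ t ∈ Finset.Icc 2 d,
      ((3 / 2 : ℝ) * (γ : ℝ) ^ (3 * (t - 1)) + (γ : ℝ) ^ (2 * t - 1)) * C ^ (d - t + 1))
      ≤ (d : ℝ) * (K * C ^ (d - 1)) := by
    have hcard : ((Finset.Icc 2 d).card : ℝ) ≤ (d : ℝ) := by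
      have h : (Finset.Icc 2 d).card ≤ d := by rw [Nat.card_Icc]; omega
      exact_mod_cast h
    calc (∑ t ∈ Finset.Icc 2 d,
        ((3 / 2 : ℝ) * (γ : ℝ) ^ (3 * (t - 1)) + (γ : ℝ) ^ (2 * t - 1)) * C ^ (d - t + 1))
        ≤ ∑ t ∈ Finset.Icc 2 d, K * C ^ (d - 1) := by
          apply Finset.sum_le_sum
          intro t ht
          simp only [Finset.mem_Icc] at ht
          have hc1 : (γ : ℝ) ^ (3 * (t - 1)) ≤ (γ : ℝ) ^ (3 * d) :=
            pow_le_pow_right₀ hγ1 (by omega)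
          have hc2 : (γ : ℝ) ^ (2 * t - 1) ≤ (γ : ℝ) ^ (2 * d) :=
            pow_le_pow_right₀ hγ1 (by omega)
          have hp : C ^ (d - t + 1) ≤ C ^ (d - 1) :=
            pow_le_pow_right₀ hC1 (by omega)
          have hcoeff : (3 / 2 : ℝ) * (γ : ℝ) ^ (3 * (t - 1)) + (γ : ℝ) ^ (2 * t - 1) ≤ K := by
            rw [hK]; nlinarith
          apply mul_le_mul hcoeff hp (by positivity) (le_of_lt hKpos)
      _ = ((Finset.Icc 2 d).card : ℝ) * (K * C ^ (d - 1)) := by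
          rw [Finset.sum_const, nsmul_eq_mul]
      _ ≤ (d : ℝ) * (K * C ^ (d - 1)) := by
          apply mul_le_mul_of_nonneg_right hcard (by positivity)
  -- d*K*C^(d-1) < C^d
  have hdK : (d : ℝ) * K < C := by linarith
  have hpow : C ^ d = C ^ (d - 1) * C := by
    rw [← pow_succ, hd1]
  have hstep : (d : ℝ) * (K * C ^ (d - 1)) < C ^ d := by
    rw [hpow]
    have hcp : (0 : ℝ) < C ^ (d - 1) := by positivity
    calc (d : ℝ) * (K * C ^ (d - 1)) = ((d : ℝ) * K) * C ^ (d - 1) := by ring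
      _ < C * C ^ (d - 1) := by exact mul_lt_mul_of_pos_right hdK hcp
      _ = C ^ (d - 1) * C := by ring
  -- coefficient inequality: γ + 5/2 ≤ γ^(2d)
  have h4 : (γ : ℝ) ^ 4 ≤ (γ : ℝ) ^ (2 * d) := pow_le_pow_right₀ hγ1 (by omega)
  have h2 : (4 : ℝ) ≤ (γ : ℝ) ^ 2 := by nlinarith
  have hcoef4 : (γ : ℝ) + 5 / 2 ≤ (γ : ℝ) ^ 4 := by nlinarith
  have hcoef : (γ : ℝ) + 5 / 2 ≤ (γ : ℝ) ^ (2 * d) := le_trans hcoef4 h4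
  have hCd : (0 : ℝ) < C ^ d := by positivity
  have hmul := mul_le_mul_of_nonneg_right hcoef (le_of_lt hCd)
  have hS := lt_of_le_of_lt hrest hstep
  linarith [hmul, hS]
end
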